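/- arXiv:1209.6613 — 4 statements merged into one kernel-verified Lean document; each statement's English description precedes it below -/
import Mathlib

section
/- Suppose μ = 0. Then Z₀ is a first integral of L: Z₀ ∈ C^∞(ℝ²∖{0}; ℂ), A·∂Z₀/∂x + B·∂Z₀/∂y = 0 at every point of ℝ²∖{0}, the differential dZ₀ vanishes nowhere on ℝ²∖{0}, and the range of Z₀ on ℝ² (with Z₀(0) = 0) is exactly the closed upper half-plane {z ∈ ℂ : Im z ≥ 0}. -/
/-!
In polar coordinates `L = r^(λ-1) (p ∂_θ - i q r ∂_r)`, so `r^σ e^{iφ(θ)}` is annihilated by `L`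
exactly when `φ' = σ q / p`, which is how `φ` is built. Since `μ = 0`, the primitive `m` of the
`2π`-periodic function `q / p` is itself periodic, so `Z₀` is well defined and smooth off the
origin, and its radial derivative `σ r^(σ-1) e^{iφ}` never vanishes. By (C1), `Re (q / p)` does not
vanish identically, so `Re m` is not constant, and after normalisation `Re φ` sweeps out exactly
`[0, π]`. As `Z₀ = r^σ e^{-Im φ} e^{i Re φ}`, the argument of `Z₀` covers `[0, π]` and its modulus
covers `(0, ∞)` along every ray `θ = const`: the range is the closed upper half-plane.
-/

open Real Complex Set Filter Function Topology ComplexConjugate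

theorem exists_pos_polar_eq {z : ℝ × ℝ} (hz : z ≠ 0) :
    ∃ r θ : ℝ, 0 < r ∧ (r * Real.cos θ, r * Real.sin θ) = z := by
  set w := equivRealProd.symm z
  have hw : w ≠ 0 := (equivRealProd.symm.injective.ne hz).trans_eq (by simp)
  exact ⟨‖w‖, arg w, norm_pos_iff.2 hw,
    Prod.ext (by rw [norm_mul_cos_arg]; simp [w]) (by rw [norm_mul_sin_arg]; simp [w])⟩

theorem contDiff_polarCoord_symm {n : WithTop ℕ∞} : ContDiff ℝ n polarCoord.symm := by
  change ContDiff ℝ n fun x : ℝ × ℝ => (x.1 * Real.cos x.2, x.1 * Real.sin x.2)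
  fun_prop

theorem ContDiffAt.of_comp_polarCoord_symm {E : Type*} [NormedAddCommGroup E] [NormedSpace ℝ E]
    {n : ℕ∞} {f g : ℝ × ℝ → E} {x : ℝ × ℝ} (hx : 0 < x.1) (hg : ContDiffAt ℝ n g x)
    (hfg : f ∘ polarCoord.symm =ᶠ[𝓝 x] g) : ContDiffAt ℝ n f (polarCoord.symm x) := by
  -- Inverse function theorem: the Jacobian of `polarCoord.symm` at `x` is `x.1 ≠ 0`, so `f` is
  -- `g` composed with a smooth local inverse of `polarCoord.symm`.
  have hdet : (fderivPolarCoordSymm x).det ≠ 0 := by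
    rw [det_fderivPolarCoordSymm]; exact hx.ne'
  have hP : ContDiffAt ℝ (⊤ : ℕ∞) polarCoord.symm x := contDiff_polarCoord_symm.contDiffAt
  have hP' : HasFDerivAt polarCoord.symm
      ((fderivPolarCoordSymm x).toContinuousLinearEquivOfDetNeZero hdet : ℝ × ℝ →L[ℝ] ℝ × ℝ) x := by
    simpa using hasFDerivAt_polarCoord_symm x
  have hstrict := hP.hasStrictFDerivAt' hP' (by simp)
  have hQ : ContDiffAt ℝ n (hP.localInverse hP' (by simp)) (polarCoord.symm x) :=
    (hP.to_localInverse hP' (by simp)).of_le (WithTop.coe_le_coe.2 le_top)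
  rw [← hP.localInverse_apply_image hP' (by simp)] at hg
  refine (hg.comp _ hQ).congr_of_eventuallyEq ?_
  filter_upwards [hstrict.eventually_right_inverse, hstrict.localInverse_tendsto.eventually hfg]
    with y hy hfy
  calc f y = f (polarCoord.symm (hstrict.localInverse _ _ _ y)) := by rw [hy]
    _ = _ := hfy

@[fun_prop]
theorem ContDiff.ofReal {E : Type*} [NormedAddCommGroup E] [NormedSpace ℝ E] {n : WithTop ℕ∞}
    {f : E → ℝ} (hf : ContDiff ℝ n f) : ContDiff ℝ n fun x => (f x : ℂ) :=
  ofRealCLM.contDiff.comp hf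

theorem contDiff_comp_cos_sin {E : Type*} [NormedAddCommGroup E] [NormedSpace ℝ E] {n : ℕ∞}
    {F : ℝ × ℝ → E} (hF : ContDiffOn ℝ n F {z | z ≠ 0}) :
    ContDiff ℝ n fun θ => F (Real.cos θ, Real.sin θ) :=
  hF.comp_contDiff (by fun_prop) fun θ h => by
    have := Real.cos_sq_add_sin_sq θ
    simp_all [Prod.ext_iff]

/-- `(cos θ, sin θ)` and `(-r sin θ, r cos θ)` are `∂_r` and `∂_θ` at `(r cos θ, r sin θ)`: this is
`α ∂_x + β ∂_y` written in polar coordinates. -/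
theorem ContinuousLinearMap.mul_apply_add_mul_apply_eq_polar (D : ℝ × ℝ →L[ℝ] ℂ) (α β : ℂ)
    {r : ℝ} (hr : r ≠ 0) (θ : ℝ) :
    α * D (1, 0) + β * D (0, 1) =
      (α * Real.cos θ + β * Real.sin θ) * D (Real.cos θ, Real.sin θ) +
        (β * Real.cos θ - α * Real.sin θ) / r * D (-(r * Real.sin θ), r * Real.cos θ) := by
  have hD : ∀ v : ℝ × ℝ, D v = v.1 * D (1, 0) + v.2 * D (0, 1) := fun v => by
    conv_lhs => rw [show v = v.1 • ((1 : ℝ), (0 : ℝ)) + v.2 • ((0 : ℝ), (1 : ℝ)) by ext <;> simp]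
    rw [map_add, map_smul, map_smul, real_smul, real_smul]
  have hcs : (Real.cos θ : ℂ) ^ 2 + (Real.sin θ : ℂ) ^ 2 = 1 := by
    exact_mod_cast Real.cos_sq_add_sin_sq θ
  rw [hD (Real.cos θ, Real.sin θ), hD (-(r * Real.sin θ), r * Real.cos θ)]
  have hr' : (r : ℂ) ≠ 0 := ofReal_ne_zero.2 hr
  simp only [ofReal_neg, ofReal_mul]
  field_simp
  linear_combination (-(α * D (1, 0)) - β * D (0, 1)) * hcs

theorem Complex.re_mul_conj_eq_normSq_mul_re_div (z w : ℂ) :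
    (z * conj w).re = normSq w * (z / w).re := by
  rcases eq_or_ne w 0 with rfl | hw
  · simp
  · rw [div_re]; field_simp [normSq_eq_zero.not.2 hw]; simp [mul_re]

theorem periodic_of_hasDerivAt_of_integral_eq_zero {E : Type*} [NormedAddCommGroup E]
    [NormedSpace ℝ E] [CompleteSpace E] {f F : ℝ → E} {T : ℝ} (hf : Periodic f T)
    (hfc : Continuous f) (hF : ∀ x, HasDerivAt F (f x) x) (h0 : ∫ x in 0..T, f x = 0) :
    Periodic F T := fun x => by
  have h := intervalIntegral.integral_eq_sub_of_hasDerivAt (fun y _ => hF y)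
    (hfc.intervalIntegrable x (x + T))
  rw [hf.intervalIntegral_add_eq x 0, zero_add, h0] at h
  exact sub_eq_zero.1 h.symm

theorem exists_re_ne_of_interior_eq_empty {F f : ℝ → ℂ} (hF : ∀ x, HasDerivAt F (f x) x)
    (h : interior {x | (f x).re = 0} = ∅) : ∃ x y, (F x).re ≠ (F y).re := by
  by_contra! hconst
  have hre : ∀ x, (f x).re = 0 := fun x => by
    have hd : HasDerivAt (fun y => (F y).re) (f x).re x :=
      reCLM.hasFDerivAt.comp_hasDerivAt x (hF x)
    rw [funext fun y => hconst y 0] at hd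
    exact hd.unique (hasDerivAt_const x _)
  simp [hre] at h

theorem range_eq_Icc_of_periodic {u : ℝ → ℝ} {T : ℝ} (hT : 0 < T) (hu : Continuous u)
    (hper : Periodic u T) : range u = Icc (sInf (u '' Icc 0 T)) (sSup (u '' Icc 0 T)) := by
  rw [← zero_add T, hper.image_Icc (by simpa using hT) 0]
  exact eq_Icc_of_connected_compact (isConnected_range hu) (hper.compact_of_continuous hT.ne' hu)

theorem lt_and_range_re_eq_Icc_of_hasDerivAt {F f : ℝ → ℂ} {T m M : ℝ} (hT : 0 < T)
    (hf : Periodic f T) (hfc : Continuous f) (hF : ∀ x, HasDerivAt F (f x) x)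
    (h0 : ∫ x in 0..T, f x = 0) (hre : interior {x | (f x).re = 0} = ∅)
    (hm : m = sInf ((fun x => (F x).re) '' Icc 0 T))
    (hM : M = sSup ((fun x => (F x).re) '' Icc 0 T)) :
    m < M ∧ range (fun x => (F x).re) = Icc m M := by
  have hper := periodic_of_hasDerivAt_of_integral_eq_zero hf hfc hF h0
  have hrange : range (fun x => (F x).re) = Icc m M := hm ▸ hM ▸
    range_eq_Icc_of_periodic hT (continuous_re.comp (continuous_iff_continuousAt.2
      fun x => (hF x).continuousAt)) fun x => by simp only [hper x]
  refine ⟨?_, hrange⟩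
  obtain ⟨x, y, hxy⟩ := exists_re_ne_of_interior_eq_empty hF hre
  have hx := hrange.subset (mem_range_self x)
  have hy := hrange.subset (mem_range_self y)
  by_contra! h
  exact hxy (by linarith [hx.1, hx.2, hy.1, hy.2])

theorem range_rescale_eq_Icc_zero_pi {u : ℝ → ℝ} {m M : ℝ} (hu : range u = Icc m M)
    (hmM : m < M) :
    range (fun x => π / (M - m) * u x - π / (M - m) * m) = Icc 0 π := by
  have hc : 0 < π / (M - m) := div_pos pi_pos (sub_pos.2 hmM)
  have : (fun x => π / (M - m) * u x - π / (M - m) * m) =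
      (fun y => π / (M - m) * y + -(π / (M - m) * m)) ∘ u := by
    ext x; simp [sub_eq_add_neg]
  rw [this, range_comp, hu, image_affine_Icc' hc]
  congr 1 <;> field_simp [(sub_pos.2 hmM).ne'] <;> ring

theorem Complex.ofReal_exp_im_mul_exp_I_mul (w : ℂ) :
    (Real.exp w.im : ℂ) * Complex.exp (Complex.I * w) = Complex.exp (w.re * Complex.I) := by
  rw [ofReal_exp, ← Complex.exp_add]
  congr 1
  nth_rw 2 [← re_add_im w]
  linear_combination (w.im : ℂ) * I_sq

def HasPolarForm (Z : ℝ × ℝ → ℂ) (σ : ℝ) (φ : ℝ → ℂ) : Prop :=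
  ∀ r θ : ℝ, 0 < r → Z (r * Real.cos θ, r * Real.sin θ) =
    ((r ^ σ : ℝ) : ℂ) * Complex.exp (Complex.I * φ θ)

namespace HasPolarForm

variable {Z : ℝ × ℝ → ℂ} {σ : ℝ} {φ : ℝ → ℂ}

theorem contDiffOn (hZ : HasPolarForm Z σ φ) {n : ℕ∞} (hφ : ContDiff ℝ n φ) :
    ContDiffOn ℝ n Z {z | z ≠ 0} := by
  rintro _ hz
  obtain ⟨r, θ, hr, rfl⟩ := exists_pos_polar_eq hz
  refine ContDiffAt.contDiffWithinAt (ContDiffAt.of_comp_polarCoord_symm (x := (r, θ))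
    (g := fun x => ((x.1 ^ σ : ℝ) : ℂ) * Complex.exp (Complex.I * φ x.2)) hr ?_ ?_)
  · have hrpow : ContDiffAt ℝ n (fun x : ℝ × ℝ => x.1 ^ σ) (r, θ) :=
      ContDiffAt.comp (g := fun s : ℝ => s ^ σ) _ (contDiffAt_rpow_const_of_ne hr.ne')
        contDiffAt_fst
    exact (ofRealCLM.contDiff.contDiffAt.comp _ hrpow).mul (by fun_prop)
  · filter_upwards [isOpen_lt continuous_const continuous_fst |>.mem_nhds hr] with x hx
    exact hZ x.1 x.2 hx

theorem fderiv_apply_radial (hZ : HasPolarForm Z σ φ) {r θ : ℝ} (hr : 0 < r)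
    (hZd : DifferentiableAt ℝ Z (r * Real.cos θ, r * Real.sin θ)) :
    fderiv ℝ Z (r * Real.cos θ, r * Real.sin θ) (Real.cos θ, Real.sin θ) =
      ((σ * r ^ (σ - 1) : ℝ) : ℂ) * Complex.exp (Complex.I * φ θ) := by
  have hray : HasDerivAt (fun s : ℝ => (s * Real.cos θ, s * Real.sin θ))
      (Real.cos θ, Real.sin θ) r := by
    simpa using ((hasDerivAt_id r).mul_const _).prodMk ((hasDerivAt_id r).mul_const _)
  have hmodel : HasDerivAt (fun s : ℝ => ((s ^ σ : ℝ) : ℂ) * Complex.exp (Complex.I * φ θ))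
      (((σ * r ^ (σ - 1) : ℝ) : ℂ) * Complex.exp (Complex.I * φ θ)) r :=
    (hasDerivAt_rpow_const (Or.inl hr.ne')).ofReal_comp.mul_const _
  refine (hZd.hasFDerivAt.comp_hasDerivAt r hray).unique (hmodel.congr_of_eventuallyEq ?_)
  filter_upwards [lt_mem_nhds hr] with s hs
  exact hZ s θ hs

theorem fderiv_apply_angular (hZ : HasPolarForm Z σ φ) {r θ : ℝ} {φ' : ℂ} (hr : 0 < r)
    (hφ : HasDerivAt φ φ' θ)
    (hZd : DifferentiableAt ℝ Z (r * Real.cos θ, r * Real.sin θ)) :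
    fderiv ℝ Z (r * Real.cos θ, r * Real.sin θ) (-(r * Real.sin θ), r * Real.cos θ) =
      ((r ^ σ : ℝ) : ℂ) * (Complex.exp (Complex.I * φ θ) * (Complex.I * φ')) := by
  have hcircle : HasDerivAt (fun t : ℝ => (r * Real.cos t, r * Real.sin t))
      (-(r * Real.sin θ), r * Real.cos θ) θ := by
    simpa using ((Real.hasDerivAt_cos θ).const_mul r).prodMk ((Real.hasDerivAt_sin θ).const_mul r)
  have hmodel := ((hφ.const_mul Complex.I).cexp).const_mul ((r ^ σ : ℝ) : ℂ)
  refine (hZd.hasFDerivAt.comp_hasDerivAt θ hcircle).unique (hmodel.congr_of_eventuallyEq ?_)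
  exact Eventually.of_forall fun t => hZ r t hr

theorem fderiv_ne_zero (hZ : HasPolarForm Z σ φ) (hσ : σ ≠ 0) {z : ℝ × ℝ} (hz : z ≠ 0)
    (hZd : DifferentiableAt ℝ Z z) : fderiv ℝ Z z ≠ 0 := by
  obtain ⟨r, θ, hr, rfl⟩ := exists_pos_polar_eq hz
  intro h0
  have := hZ.fderiv_apply_radial hr hZd
  rw [h0, zero_apply, eq_comm] at this
  simp [hσ, Complex.exp_ne_zero, (rpow_pos_of_pos hr _).ne'] at this

theorem mul_fderiv_add_mul_fderiv_eq_zero (hZ : HasPolarForm Z σ φ) {r θ : ℝ} {α β : ℂ}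
    (hr : 0 < r) (hp : β * Real.cos θ - α * Real.sin θ ≠ 0)
    (hφ : HasDerivAt φ (σ * (Complex.I * (α * Real.cos θ + β * Real.sin θ) /
      (β * Real.cos θ - α * Real.sin θ))) θ)
    (hZd : DifferentiableAt ℝ Z (r * Real.cos θ, r * Real.sin θ)) :
    α * fderiv ℝ Z (r * Real.cos θ, r * Real.sin θ) (1, 0) +
      β * fderiv ℝ Z (r * Real.cos θ, r * Real.sin θ) (0, 1) = 0 := by
  rw [ContinuousLinearMap.mul_apply_add_mul_apply_eq_polar _ α β hr.ne' θ,
    hZ.fderiv_apply_radial hr hZd, hZ.fderiv_apply_angular hr hφ hZd,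
    rpow_sub_one hr.ne']
  have hr' : (r : ℂ) ≠ 0 := ofReal_ne_zero.2 hr.ne'
  simp only [ofReal_mul, ofReal_div]
  generalize β * Real.cos θ - α * Real.sin θ = P at hp ⊢
  field_simp
  linear_combination (α * Real.cos θ + β * Real.sin θ) * σ * ((r ^ σ : ℝ) : ℂ) *
    Complex.exp (Complex.I * φ θ) * Complex.I_sq

theorem range_eq_setOf_im_nonneg (hZ : HasPolarForm Z σ φ) (hσ : σ ≠ 0) (hZ0 : Z 0 = 0)
    (hφ : range (fun θ => (φ θ).re) = Icc 0 π) :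
    range Z = {w : ℂ | 0 ≤ w.im} := by
  ext w
  constructor
  · rintro ⟨z, rfl⟩
    rcases eq_or_ne z 0 with rfl | hz
    · simp [hZ0]
    obtain ⟨r, θ, hr, rfl⟩ := exists_pos_polar_eq hz
    have hθ : (φ θ).re ∈ Icc 0 π := hφ ▸ mem_range_self θ
    rw [mem_ofPred_eq, hZ r θ hr, im_ofReal_mul, Complex.exp_im]
    have : (Complex.I * φ θ).im = (φ θ).re := by simp
    rw [this]
    have := sin_nonneg_of_nonneg_of_le_pi hθ.1 hθ.2
    positivity
  · intro hw
    rcases eq_or_ne w 0 with rfl | hw0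
    · exact ⟨0, hZ0⟩
    obtain ⟨θ, hθ : (φ θ).re = arg w⟩ : arg w ∈ range (fun θ => (φ θ).re) :=
      hφ ▸ ⟨arg_nonneg_iff.2 hw, arg_le_pi w⟩
    have ht : 0 < ‖w‖ * Real.exp (φ θ).im := by positivity
    refine ⟨((‖w‖ * Real.exp (φ θ).im) ^ σ⁻¹ * Real.cos θ,
      (‖w‖ * Real.exp (φ θ).im) ^ σ⁻¹ * Real.sin θ), ?_⟩
    rw [hZ _ _ (rpow_pos_of_pos ht _), rpow_inv_rpow ht.le hσ, ofReal_mul, mul_assoc,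
      Complex.ofReal_exp_im_mul_exp_I_mul, hθ]
    exact norm_mul_exp_arg_mul_I w

end HasPolarForm

/-- In polar coordinates `A ∂_x + B ∂_y = r^(λ-1) (p ∂_θ - i q r ∂_r)` with `p = angularCoeff A B`
and `q = radialCoeff A B`. -/
noncomputable def angularCoeff (A B : ℝ × ℝ → ℂ) (θ : ℝ) : ℂ :=
  B (Real.cos θ, Real.sin θ) * Real.cos θ - A (Real.cos θ, Real.sin θ) * Real.sin θ

noncomputable def radialCoeff (A B : ℝ × ℝ → ℂ) (θ : ℝ) : ℂ :=
  Complex.I * (A (Real.cos θ, Real.sin θ) * Real.cos θ + B (Real.cos θ, Real.sin θ) * Real.sin θ)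

section Coefficients

variable {A B : ℝ × ℝ → ℂ}

theorem contDiff_radialCoeff_div_angularCoeff {n : ℕ∞} (hA : ContDiffOn ℝ n A {z | z ≠ 0})
    (hB : ContDiffOn ℝ n B {z | z ≠ 0}) (hp : ∀ θ, angularCoeff A B θ ≠ 0) :
    ContDiff ℝ n fun θ => radialCoeff A B θ / angularCoeff A B θ := by
  have ha := contDiff_comp_cos_sin hA
  have hb := contDiff_comp_cos_sin hB
  have hcos : ContDiff ℝ n fun θ => (Real.cos θ : ℂ) := by fun_prop
  have hsin : ContDiff ℝ n fun θ => (Real.sin θ : ℂ) := by fun_prop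
  have hp' : ContDiff ℝ n (angularCoeff A B) := (hb.mul hcos).sub (ha.mul hsin)
  have hq' : ContDiff ℝ n (radialCoeff A B) := contDiff_const.mul ((ha.mul hcos).add (hb.mul hsin))
  simp only [div_eq_mul_inv]
  exact hq'.mul (hp'.inv hp)

theorem periodic_radialCoeff_div_angularCoeff :
    Periodic (fun θ => radialCoeff A B θ / angularCoeff A B θ) (2 * π) := fun θ => by
  simp only [radialCoeff, angularCoeff, Real.cos_add_two_pi, Real.sin_add_two_pi]

theorem HasPolarForm.mul_fderiv_add_mul_fderiv_eq_zero_of_homogeneous {Z : ℝ × ℝ → ℂ} {σ : ℝ}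
    {φ : ℝ → ℂ} (hZ : HasPolarForm Z σ φ) {lam : ℂ}
    (hAh : ∀ t : ℝ, 0 < t → ∀ z : ℝ × ℝ, A (t • z) = (t : ℂ) ^ lam * A z)
    (hBh : ∀ t : ℝ, 0 < t → ∀ z : ℝ × ℝ, B (t • z) = (t : ℂ) ^ lam * B z)
    (hp : ∀ θ, angularCoeff A B θ ≠ 0)
    (hφ : ∀ θ, HasDerivAt φ (σ * (radialCoeff A B θ / angularCoeff A B θ)) θ)
    {z : ℝ × ℝ} (hz : z ≠ 0) (hZd : DifferentiableAt ℝ Z z) :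
    A z * fderiv ℝ Z z (1, 0) + B z * fderiv ℝ Z z (0, 1) = 0 := by
  obtain ⟨r, θ, hr, rfl⟩ := exists_pos_polar_eq hz
  have hpolar : (r * Real.cos θ, r * Real.sin θ) = r • (Real.cos θ, Real.sin θ) := by simp
  rw [hpolar, hAh r hr, hBh r hr, mul_assoc, mul_assoc, ← mul_add, ← hpolar,
    hZ.mul_fderiv_add_mul_fderiv_eq_zero hr (hp θ) (hφ θ) hZd, mul_zero]

end Coefficients

theorem stmt_1_general
    (A B : ℝ × ℝ → ℂ) (lam : ℂ)
    (hA : ContDiffOn ℝ (⊤ : ℕ∞) A {z : ℝ × ℝ | z ≠ 0})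
    (hB : ContDiffOn ℝ (⊤ : ℕ∞) B {z : ℝ × ℝ | z ≠ 0})
    (hAh : ∀ t : ℝ, 0 < t → ∀ z : ℝ × ℝ, A (t • z) = (t : ℂ) ^ lam * A z)
    (hBh : ∀ t : ℝ, 0 < t → ∀ z : ℝ × ℝ, B (t • z) = (t : ℂ) ^ lam * B z)
    (a b p q : ℝ → ℂ)
    (ha : ∀ θ : ℝ, a θ = A (Real.cos θ, Real.sin θ))
    (hb : ∀ θ : ℝ, b θ = B (Real.cos θ, Real.sin θ))
    (hpdef : ∀ θ : ℝ, p θ = b θ * (Real.cos θ : ℂ) - a θ * (Real.sin θ : ℂ))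
    (hqdef : ∀ θ : ℝ, q θ = Complex.I * (a θ * (Real.cos θ : ℂ) + b θ * (Real.sin θ : ℂ)))
    (hC1 : interior {θ : ℝ | (q θ * (starRingEnd ℂ) (p θ)).re = 0} = ∅)
    (hC2 : ∀ θ : ℝ, p θ ≠ 0)
    (mu : ℂ)
    (hmudef : mu = (1 / (2 * Real.pi)) * ∫ θ in (0:ℝ)..(2 * Real.pi), q θ / p θ)
    (hmu0 : mu = 0)
    (psi : ℝ → ℂ)
    (hpsider : ∀ θ : ℝ, HasDerivAt psi (q θ / p θ) θ)
    (maxm minm : ℝ)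
    (hmaxm : maxm = sSup ((fun θ => (psi θ).re) '' Set.Icc (0:ℝ) (2 * Real.pi)))
    (hminm : minm = sInf ((fun θ => (psi θ).re) '' Set.Icc (0:ℝ) (2 * Real.pi)))
    (sigma : ℝ) (hsigma : sigma = Real.pi / (maxm - minm))
    (phi : ℝ → ℂ) (hphidef : ∀ θ : ℝ, phi θ = (sigma : ℂ) * psi θ - ((sigma * minm : ℝ) : ℂ))
    (Z : ℝ × ℝ → ℂ) (hZzero : Z 0 = 0)
    (hZ : ∀ r θ : ℝ, 0 < r → Z (r * Real.cos θ, r * Real.sin θ) =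
      ((r ^ sigma : ℝ) : ℂ) * Complex.exp (Complex.I * phi θ)) :
    ContDiffOn ℝ (⊤ : ℕ∞) Z {z : ℝ × ℝ | z ≠ 0} ∧
    (∀ z : ℝ × ℝ, z ≠ 0 →
      A z * fderiv ℝ Z z (1, 0) + B z * fderiv ℝ Z z (0, 1) = 0) ∧
    (∀ z : ℝ × ℝ, z ≠ 0 → fderiv ℝ Z z ≠ 0) ∧
    Set.range Z = {w : ℂ | 0 ≤ w.im} := by
  obtain rfl : p = angularCoeff A B := funext fun θ => by rw [hpdef, ha, hb, angularCoeff]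
  obtain rfl : q = radialCoeff A B := funext fun θ => by rw [hqdef, ha, hb, radialCoeff]
  have hqp := contDiff_radialCoeff_div_angularCoeff hA hB hC2
  have hpsi : ContDiff ℝ (⊤ : ℕ∞) psi := contDiff_infty_iff_deriv.2
    ⟨fun θ => (hpsider θ).differentiableAt, by rwa [funext fun θ => (hpsider θ).deriv]⟩
  obtain ⟨hlt, hrange⟩ := lt_and_range_re_eq_Icc_of_hasDerivAt two_pi_pos
    periodic_radialCoeff_div_angularCoeff hqp.continuous hpsider
    ((mul_eq_zero.1 (hmudef ▸ hmu0)).resolve_left (by simp [pi_ne_zero]))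
    (subset_empty_iff.1 <| hC1 ▸ interior_mono fun θ (hθ : (_ / _ : ℂ).re = 0) => by
      rw [mem_ofPred_eq, Complex.re_mul_conj_eq_normSq_mul_re_div, hθ, mul_zero])
    hminm hmaxm
  have hσ : 0 < sigma := hsigma ▸ div_pos pi_pos (sub_pos.2 hlt)
  have hphirange : range (fun θ => (phi θ).re) = Icc 0 π := by
    rw [← range_rescale_eq_Icc_zero_pi hrange hlt, ← hsigma]
    simp [hphidef]
  have hZ' : HasPolarForm Z sigma phi := hZ
  have hZd : ContDiffOn ℝ (⊤ : ℕ∞) Z {z | z ≠ 0} :=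
    hZ'.contDiffOn (by rw [funext hphidef]; exact (contDiff_const.mul hpsi).sub contDiff_const)
  have hdiff : ∀ z : ℝ × ℝ, z ≠ 0 → DifferentiableAt ℝ Z z := fun z hz =>
    (hZd.differentiableOn (by simp)).differentiableAt (isOpen_ne.mem_nhds hz)
  have hphi' : ∀ θ, HasDerivAt phi (sigma * (radialCoeff A B θ / angularCoeff A B θ)) θ :=
    fun θ => by rw [funext hphidef]; exact ((hpsider θ).const_mul _).sub_const _
  exact ⟨hZd,
    fun z hz =>
      hZ'.mul_fderiv_add_mul_fderiv_eq_zero_of_homogeneous hAh hBh hC2 hphi' hz (hdiff z hz),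
    fun z hz => hZ'.fderiv_ne_zero hσ.ne' hz (hdiff z hz),
    hZ'.range_eq_setOf_im_nonneg hσ.ne' hZzero hphirange⟩

/-- Suppose μ = 0.  Then Z₀ is a first integral of L: it is C^∞ on ℝ²∖{0},
annihilated by L there, has nowhere vanishing differential on ℝ²∖{0}, and its
range is exactly the closed upper half-plane. -/
theorem stmt_1
    (A B : ℝ × ℝ → ℂ) (lam : ℂ)
    (hA : ContDiffOn ℝ (⊤ : ℕ∞) A {z : ℝ × ℝ | z ≠ 0})
    (hB : ContDiffOn ℝ (⊤ : ℕ∞) B {z : ℝ × ℝ | z ≠ 0})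
    (hlam : 1 < lam.re)
    (hAh : ∀ t : ℝ, 0 < t → ∀ z : ℝ × ℝ, A (t • z) = (t : ℂ) ^ lam * A z)
    (hBh : ∀ t : ℝ, 0 < t → ∀ z : ℝ × ℝ, B (t • z) = (t : ℂ) ^ lam * B z)
    (a b p q : ℝ → ℂ)
    (ha : ∀ θ : ℝ, a θ = A (Real.cos θ, Real.sin θ))
    (hb : ∀ θ : ℝ, b θ = B (Real.cos θ, Real.sin θ))
    (hpdef : ∀ θ : ℝ, p θ = b θ * (Real.cos θ : ℂ) - a θ * (Real.sin θ : ℂ))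
    (hqdef : ∀ θ : ℝ, q θ = Complex.I * (a θ * (Real.cos θ : ℂ) + b θ * (Real.sin θ : ℂ)))
    (hC1 : interior {θ : ℝ | (q θ * (starRingEnd ℂ) (p θ)).re = 0} = ∅)
    (hC2 : ∀ θ : ℝ, p θ ≠ 0)
    (mu : ℂ)
    (hmudef : mu = (1 / (2 * Real.pi)) * ∫ θ in (0:ℝ)..(2 * Real.pi), q θ / p θ)
    (hmu0 : mu = 0)
    (psi : ℝ → ℂ) (hpsi0 : psi 0 = 0)
    (hpsider : ∀ θ : ℝ, HasDerivAt psi (q θ / p θ) θ)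
    (maxm minm : ℝ)
    (hmaxm : maxm = sSup ((fun θ => (psi θ).re) '' Set.Icc (0:ℝ) (2 * Real.pi)))
    (hminm : minm = sInf ((fun θ => (psi θ).re) '' Set.Icc (0:ℝ) (2 * Real.pi)))
    (sigma : ℝ) (hsigma : sigma = Real.pi / (maxm - minm))
    (phi : ℝ → ℂ) (hphidef : ∀ θ : ℝ, phi θ = (sigma : ℂ) * psi θ - ((sigma * minm : ℝ) : ℂ))
    (Z : ℝ × ℝ → ℂ) (hZzero : Z 0 = 0)
    (hZ : ∀ r θ : ℝ, 0 < r → Z (r * Real.cos θ, r * Real.sin θ) =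
      ((r ^ sigma : ℝ) : ℂ) * Complex.exp (Complex.I * phi θ)) :
    ContDiffOn ℝ (⊤ : ℕ∞) Z {z : ℝ × ℝ | z ≠ 0} ∧
    (∀ z : ℝ × ℝ, z ≠ 0 →
      A z * fderiv ℝ Z z (1, 0) + B z * fderiv ℝ Z z (0, 1) = 0) ∧
    (∀ z : ℝ × ℝ, z ≠ 0 → fderiv ℝ Z z ≠ 0) ∧
    Set.range Z = {w : ℂ | 0 ≤ w.im} :=
  stmt_1_general A B lam hA hB hAh hBh a b p q ha hb hpdef hqdef hC1 hC2 mu hmudef hmu0 psi hpsider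
    maxm minm hmaxm hminm sigma hsigma phi hphidef Z hZzero hZ
end

section
/- Suppose μ = iβ with β ∈ ℝ, β ≠ 0. Set m = min_{θ∈[0,2π]} e^{−φ₂(θ)} and M = max_{θ∈[0,2π]} e^{−φ₂(θ)}. Then Z_{iβ} maps ℝ²∖{0} onto the closed annulus A(m,M) = {z ∈ ℂ : m ≤ |z| ≤ M}; moreover, for every ε > 0, Z_{iβ} maps the punctured disc {(x,y) : 0 < x²+y² < ε²} onto A(m,M). -/
/-!
`Z_{iβ}` is `e^{-φ₂(θ)}` times a unimodular factor, so `|Z_{iβ}|` only depends on `θ` and its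
values are the range of the continuous periodic function `e^{-φ₂}`, which is `[m, M]`. Conversely,
on the ray of direction `θ` the phase `θ + φ₁(θ) - (ln r)/β` sweeps out every value as `r → 0`,
so every point of the circle `|w| = e^{-φ₂(θ)}` is hit at arbitrarily small `r`.
-/

open Real Complex Set

theorem Function.Periodic.range_eq_Icc_sInf_sSup {f : ℝ → ℝ} {T : ℝ} (hper : f.Periodic T)
    (hT : 0 < T) (hf : Continuous f) :
    range f = Icc (sInf (f '' Icc 0 T)) (sSup (f '' Icc 0 T)) := by
  rw [← hper.image_Icc hT 0, zero_add]
  exact ContinuousOn.image_Icc hT.le hf.continuousOn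

theorem exists_int_lt_mul {s : ℝ} (hs : s ≠ 0) (y : ℝ) : ∃ k : ℤ, y < k * s := by
  rcases hs.lt_or_gt with hneg | hpos
  · obtain ⟨k, hk⟩ := exists_int_lt (y / s)
    exact ⟨k, (lt_div_iff_of_neg hneg).mp hk⟩
  · obtain ⟨k, hk⟩ := exists_int_gt (y / s)
    exact ⟨k, (div_lt_iff₀ hpos).mp hk⟩

theorem exists_mem_Ioo_sub_log_div_eq_int_mul {β ε : ℝ} (hβ : β ≠ 0) (hε : 0 < ε) (x : ℝ) :
    ∃ r ∈ Ioo 0 ε, ∃ k : ℤ, x - Real.log r / β = k * (2 * π) := by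
  obtain ⟨k, hk⟩ := exists_int_lt_mul (mul_ne_zero (by positivity : 2 * π ≠ 0) hβ)
    (β * x - Real.log ε)
  refine ⟨Real.exp (β * (x - k * (2 * π))), ⟨Real.exp_pos _, ?_⟩, k, ?_⟩
  · rw [← Real.lt_log_iff_exp_lt hε]
    linarith
  · rw [Real.log_exp]
    field_simp
    ring

theorem Complex.exp_I_mul_add_int_mul_two_pi (α : ℝ) (k : ℤ) :
    Complex.exp (I * ((α + k * (2 * π) : ℝ) : ℂ)) = Complex.exp (I * α) := by
  rw [exp_eq_exp_iff_exists_int]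
  exact ⟨k, by push_cast; ring⟩

theorem Prod.mk_mul_cos_mul_sin_ne_zero {r : ℝ} (hr : r ≠ 0) (θ : ℝ) :
    (r * Real.cos θ, r * Real.sin θ) ≠ (0 : ℝ × ℝ) := by
  intro h
  have hc : Real.cos θ = 0 := (mul_eq_zero.mp (congrArg Prod.fst h)).resolve_left hr
  have hs : Real.sin θ = 0 := (mul_eq_zero.mp (congrArg Prod.snd h)).resolve_left hr
  simpa [hc, hs] using Real.sin_sq_add_cos_sq θ

theorem Prod.norm_mk_mul_cos_mul_sin_le {r : ℝ} (hr : 0 ≤ r) (θ : ℝ) :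
    ‖(r * Real.cos θ, r * Real.sin θ)‖ ≤ r := by
  rw [Prod.norm_def, norm_mul, norm_mul, Real.norm_of_nonneg hr]
  exact max_le (mul_le_of_le_one_right hr (Real.abs_cos_le_one θ))
    (mul_le_of_le_one_right hr (Real.abs_sin_le_one θ))

theorem Prod.exists_pos_eq_mk_mul_cos_mul_sin {z : ℝ × ℝ} (hz : z ≠ 0) :
    ∃ r θ : ℝ, 0 < r ∧ z = (r * Real.cos θ, r * Real.sin θ) := by
  set w : ℂ := equivRealProd.symm z
  have hw : w ≠ 0 := by simpa [w, Complex.ext_iff, Prod.ext_iff] using hz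
  refine ⟨‖w‖, arg w, norm_pos_iff.mpr hw, ?_⟩
  rw [norm_mul_cos_arg, norm_mul_sin_arg]
  rfl

section PolarMap

variable {f g : ℝ → ℝ} {β : ℝ} {Z : ℝ × ℝ → ℂ}
  (hZ : ∀ r θ : ℝ, 0 < r →
    Z (r * Real.cos θ, r * Real.sin θ) =
      (f θ : ℂ) * Complex.exp (I * ((g θ - Real.log r / β : ℝ) : ℂ)))
include hZ

theorem norm_apply_mk_mul_cos_mul_sin (hf : ∀ θ, 0 ≤ f θ) {r : ℝ} (hr : 0 < r) (θ : ℝ) :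
    ‖Z (r * Real.cos θ, r * Real.sin θ)‖ = f θ := by
  rw [hZ r θ hr, norm_mul, norm_exp_I_mul_ofReal, mul_one, norm_real,
    Real.norm_of_nonneg (hf θ)]

theorem image_ne_zero_subset_norm_preimage_range (hf : ∀ θ, 0 ≤ f θ) :
    Z '' {z | z ≠ 0} ⊆ norm ⁻¹' range f := by
  rintro _ ⟨z, hz, rfl⟩
  obtain ⟨r, θ, hr, rfl⟩ := Prod.exists_pos_eq_mk_mul_cos_mul_sin hz
  exact ⟨θ, (norm_apply_mk_mul_cos_mul_sin hZ hf hr θ).symm⟩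

theorem norm_preimage_range_subset_image_punctured_ball (hβ : β ≠ 0) {ε : ℝ} (hε : 0 < ε) :
    norm ⁻¹' range f ⊆ Z '' {z | z ≠ 0 ∧ ‖z‖ < ε} := by
  rintro w ⟨θ, hθ⟩
  obtain ⟨r, ⟨hr, hrε⟩, k, hk⟩ := exists_mem_Ioo_sub_log_div_eq_int_mul hβ hε (g θ - arg w)
  refine ⟨(r * Real.cos θ, r * Real.sin θ),
    ⟨Prod.mk_mul_cos_mul_sin_ne_zero hr.ne' θ,
      (Prod.norm_mk_mul_cos_mul_sin_le hr.le θ).trans_lt hrε⟩, ?_⟩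
  have hphase : g θ - Real.log r / β = arg w + k * (2 * π) := by linarith
  rw [hZ r θ hr, hphase, exp_I_mul_add_int_mul_two_pi, hθ, mul_comm I,
    norm_mul_exp_arg_mul_I]

theorem image_ne_zero_eq_norm_preimage_range (hf : ∀ θ, 0 ≤ f θ) (hβ : β ≠ 0) :
    Z '' {z | z ≠ 0} = norm ⁻¹' range f :=
  (image_ne_zero_subset_norm_preimage_range hZ hf).antisymm
    ((norm_preimage_range_subset_image_punctured_ball hZ hβ one_pos).trans
      (image_mono fun _ hz => hz.1))

theorem image_punctured_ball_eq_norm_preimage_range (hf : ∀ θ, 0 ≤ f θ) (hβ : β ≠ 0) {ε : ℝ}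
    (hε : 0 < ε) :
    Z '' {z | z ≠ 0 ∧ ‖z‖ < ε} = norm ⁻¹' range f :=
  ((image_mono fun _ hz => hz.1).trans (image_ne_zero_subset_norm_preimage_range hZ hf)).antisymm
    (norm_preimage_range_subset_image_punctured_ball hZ hβ hε)

end PolarMap

theorem stmt_3_general
    (p q : ℝ → ℂ)
    (mu : ℂ)
    (beta : ℝ) (hbeta : beta ≠ 0)
    (phi : ℝ → ℂ)
    (hphiper : Function.Periodic phi (2 * Real.pi))
    (hphider : ∀ θ : ℝ, HasDerivAt phi (q θ / (mu * p θ) - 1) θ)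
    (m M : ℝ)
    (hm : m = sInf ((fun θ => Real.exp (-(phi θ).im)) '' Set.Icc (0:ℝ) (2 * Real.pi)))
    (hM : M = sSup ((fun θ => Real.exp (-(phi θ).im)) '' Set.Icc (0:ℝ) (2 * Real.pi)))
    (Z : ℝ × ℝ → ℂ)
    (hZ : ∀ r θ : ℝ, 0 < r → Z (r * Real.cos θ, r * Real.sin θ) =
      ((Real.exp (-(phi θ).im)) : ℂ) *
        Complex.exp (Complex.I * ((θ + (phi θ).re - Real.log r / beta : ℝ) : ℂ))) :
    (Z '' {z : ℝ × ℝ | z ≠ 0} = {w : ℂ | m ≤ ‖w‖ ∧ ‖w‖ ≤ M}) ∧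
    (∀ ε : ℝ, 0 < ε →
      Z '' {z : ℝ × ℝ | z ≠ 0 ∧ ‖z‖ < ε} = {w : ℂ | m ≤ ‖w‖ ∧ ‖w‖ ≤ M}) := by
  set f : ℝ → ℝ := fun θ => Real.exp (-(phi θ).im)
  have hf : ∀ θ, 0 ≤ f θ := fun θ => (Real.exp_pos _).le
  have hphi : Continuous phi :=
    continuous_iff_continuousAt.2 fun θ => (hphider θ).continuousAt
  have hrange : range f = Icc m M := by
    rw [hm, hM]
    exact Function.Periodic.range_eq_Icc_sInf_sSup (fun θ => by simp only [f, hphiper θ])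
      two_pi_pos (by fun_prop)
  have hannulus : {w : ℂ | m ≤ ‖w‖ ∧ ‖w‖ ≤ M} = norm ⁻¹' range f := by
    rw [hrange]
    rfl
  rw [hannulus]
  exact ⟨image_ne_zero_eq_norm_preimage_range hZ hf hbeta,
    fun ε hε => image_punctured_ball_eq_norm_preimage_range hZ hf hbeta hε⟩

/-- Suppose μ = iβ with β real nonzero.  With m, M the min and max of e^{-φ₂},
Z_{iβ} maps ℝ²∖{0} onto the closed annulus {m ≤ |z| ≤ M}, and in fact maps every
punctured disc around the origin onto that annulus. -/
theorem stmt_3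
    (A B : ℝ × ℝ → ℂ) (lam : ℂ)
    (hA : ContDiffOn ℝ (⊤ : ℕ∞) A {z : ℝ × ℝ | z ≠ 0})
    (hB : ContDiffOn ℝ (⊤ : ℕ∞) B {z : ℝ × ℝ | z ≠ 0})
    (hlam : 1 < lam.re)
    (hAh : ∀ t : ℝ, 0 < t → ∀ z : ℝ × ℝ, A (t • z) = (t : ℂ) ^ lam * A z)
    (hBh : ∀ t : ℝ, 0 < t → ∀ z : ℝ × ℝ, B (t • z) = (t : ℂ) ^ lam * B z)
    (a b p q : ℝ → ℂ)
    (ha : ∀ θ : ℝ, a θ = A (Real.cos θ, Real.sin θ))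
    (hb : ∀ θ : ℝ, b θ = B (Real.cos θ, Real.sin θ))
    (hpdef : ∀ θ : ℝ, p θ = b θ * (Real.cos θ : ℂ) - a θ * (Real.sin θ : ℂ))
    (hqdef : ∀ θ : ℝ, q θ = Complex.I * (a θ * (Real.cos θ : ℂ) + b θ * (Real.sin θ : ℂ)))
    (hC1 : interior {θ : ℝ | (q θ * (starRingEnd ℂ) (p θ)).re = 0} = ∅)
    (hC2 : ∀ θ : ℝ, p θ ≠ 0)
    (mu : ℂ)
    (hmudef : mu = (1 / (2 * Real.pi)) * ∫ θ in (0:ℝ)..(2 * Real.pi), q θ / p θ)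
    (beta : ℝ) (hbeta : beta ≠ 0) (hmubeta : mu = Complex.I * (beta : ℂ))
    (phi : ℝ → ℂ)
    (hphiper : Function.Periodic phi (2 * Real.pi))
    (hphider : ∀ θ : ℝ, HasDerivAt phi (q θ / (mu * p θ) - 1) θ)
    (hphimean : (∫ θ in (0:ℝ)..(2 * Real.pi), phi θ) = 0)
    (m M : ℝ)
    (hm : m = sInf ((fun θ => Real.exp (-(phi θ).im)) '' Set.Icc (0:ℝ) (2 * Real.pi)))
    (hM : M = sSup ((fun θ => Real.exp (-(phi θ).im)) '' Set.Icc (0:ℝ) (2 * Real.pi)))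
    (Z : ℝ × ℝ → ℂ)
    (hZ : ∀ r θ : ℝ, 0 < r → Z (r * Real.cos θ, r * Real.sin θ) =
      ((Real.exp (-(phi θ).im)) : ℂ) *
        Complex.exp (Complex.I * ((θ + (phi θ).re - Real.log r / beta : ℝ) : ℂ))) :
    (Z '' {z : ℝ × ℝ | z ≠ 0} = {w : ℂ | m ≤ ‖w‖ ∧ ‖w‖ ≤ M}) ∧
    (∀ ε : ℝ, 0 < ε →
      Z '' {z : ℝ × ℝ | z ≠ 0 ∧ ‖z‖ < ε} = {w : ℂ | m ≤ ‖w‖ ∧ ‖w‖ ≤ M}) :=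
  stmt_3_general p q mu beta hbeta phi hphiper hphider m M hm hM Z hZ
end

section
/- Let λ ∈ ℂ with Re λ > 1, let P be a nonnegative integer, and set μ = P/(λ+1). Then the pair (μ,λ) is resonant if and only if P = 0 or λ ∈ ℚ (i.e. λ is a rational real number, necessarily > 1); and in that case (μ,λ) has infinitely many resonant integers. -/
/-!
With `μ = P / (λ + 1)`, the resonance equation `μ λ = μ l + k` is equivalent to
`(P - k) λ = P l + k`. For `P ≠ 0` and `l ≥ 1` this forces `k ≠ P`, so `λ = (P l + k) / (P - k)`
is rational. Conversely, if `P = 0` every `l ≥ 1` is resonant, and if `λ = a / b` in lowest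
terms with `a + b > 0`, then `l = m (a + b) - 1`, `k = P (1 - m b)` is a solution for every
integer `m`.
-/

/-- The pair (μ,λ) is resonant if μλ = μl + k for some integers l ≥ 1, k. -/
def IsResonant (mu lam : ℂ) : Prop :=
  ∃ l : ℤ, 1 ≤ l ∧ ∃ k : ℤ, mu * lam = mu * l + k

/-- The set 𝕁(μ,λ) of resonant integers for the pair (μ,λ). -/
def resonantSet (mu lam : ℂ) : Set ℤ :=
  {l : ℤ | 1 ≤ l ∧ ∃ k : ℤ, mu * lam = mu * l + k}

theorem isResonant_iff_nonempty_resonantSet {mu lam : ℂ} :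
    IsResonant mu lam ↔ (resonantSet mu lam).Nonempty :=
  Iff.rfl

theorem resonantSet_zero (lam : ℂ) : resonantSet 0 lam = Set.Ici 1 := by
  ext l
  exact ⟨And.left, fun hl => ⟨hl, 0, by simp⟩⟩

theorem div_mul_eq_div_mul_add_iff {K : Type*} [Field K] {lam : K} (hlam : lam + 1 ≠ 0)
    (P l k : K) :
    P / (lam + 1) * lam = P / (lam + 1) * l + k ↔ (P - k) * lam = P * l + k := by
  rw [← sub_eq_iff_eq_add', ← mul_sub, div_mul_eq_mul_div, div_eq_iff hlam]
  constructor <;> intro h <;> linear_combination h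

theorem exists_rat_eq_of_isResonant {lam : ℂ} (hlam : lam + 1 ≠ 0) {P : ℤ} (hP : P ≠ 0)
    (hres : IsResonant (P / (lam + 1)) lam) : ∃ x : ℚ, lam = x := by
  obtain ⟨l, hl, k, hk⟩ := hres
  rw [div_mul_eq_div_mul_add_iff hlam] at hk
  have hPk : P - k ≠ 0 := by
    intro h
    rw [show k = P by omega] at hk
    have : ((P * (l + 1) : ℤ) : ℂ) = 0 := by push_cast; linear_combination -hk
    have : P * (l + 1) = 0 := by exact_mod_cast this
    rcases mul_eq_zero.mp this with h | h <;> omega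
  refine ⟨(P * l + k : ℤ) / (P - k : ℤ), ?_⟩
  have hPkC : ((P - k : ℤ) : ℂ) ≠ 0 := by exact_mod_cast hPk
  push_cast at hPkC ⊢
  rw [eq_div_iff hPkC]
  linear_combination hk

theorem Rat.cast_mul_den_eq_num {K : Type*} [DivisionRing K] [CharZero K] (x : ℚ) :
    (x : K) * x.den = x.num := by
  exact_mod_cast congrArg (Rat.cast (K := K)) x.mul_den_eq_num

theorem mem_resonantSet_of_rat (x : ℚ) (hx : (x : ℂ) + 1 ≠ 0) (P m : ℤ)
    (hm : 1 ≤ m * (x.num + x.den) - 1) :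
    m * (x.num + x.den) - 1 ∈ resonantSet (P / (x + 1)) x := by
  refine ⟨hm, P * (1 - m * x.den), ?_⟩
  rw [div_mul_eq_div_mul_add_iff hx]
  push_cast
  linear_combination (P * m : ℂ) * Rat.cast_mul_den_eq_num (K := ℂ) x

theorem Rat.num_add_den_pos {x : ℚ} (hx : -1 < x) : 0 < x.num + x.den := by
  have : (-1 : ℚ) * x.den < x * x.den := mul_lt_mul_of_pos_right hx (by positivity)
  rw [x.mul_den_eq_num] at this
  have : -(x.den : ℤ) < x.num := by exact_mod_cast (by linarith : -(x.den : ℚ) < x.num)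
  omega

theorem resonantSet_infinite_of_rat {x : ℚ} (hx : -1 < x) (P : ℤ) :
    (resonantSet (P / (x + 1)) x).Infinite := by
  have hd := Rat.num_add_den_pos hx
  have hx1 : (x : ℂ) + 1 ≠ 0 := by exact_mod_cast (by linarith : x + 1 ≠ 0)
  refine Set.infinite_of_injective_forall_mem (f := fun n : ℕ => (n + 2) * (x.num + x.den) - 1)
    (fun n m h => ?_) (fun n => mem_resonantSet_of_rat x hx1 P _ (by nlinarith))
  have := mul_right_cancel₀ hd.ne' (sub_left_injective h)
  omega

/-- For λ ∈ ℂ with Re λ > 1, P a nonnegative integer and μ = P/(λ+1):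
the pair (μ,λ) is resonant iff P = 0 or λ is a rational (real) number, and in
that case there are infinitely many resonant integers. -/
theorem stmt_13 (lam : ℂ) (hlam : 1 < lam.re) (P : ℕ) (mu : ℂ)
    (hmu : mu = (P : ℂ) / (lam + 1)) :
    (IsResonant mu lam ↔ (P = 0 ∨ ∃ x : ℚ, lam = (x : ℂ))) ∧
    (IsResonant mu lam → (resonantSet mu lam).Infinite) := by
  have hlam1 : lam + 1 ≠ 0 := fun h => by
    have := congrArg Complex.re h
    simp only [Complex.add_re, Complex.one_re, Complex.zero_re] at this
    linarith
  have hmuInt : mu = ((P : ℤ) : ℂ) / (lam + 1) := by rw [hmu, Int.cast_natCast]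
  have infinite : (P = 0 ∨ ∃ x : ℚ, lam = x) → (resonantSet mu lam).Infinite := by
    rintro (rfl | ⟨x, rfl⟩)
    · rw [hmu, Nat.cast_zero, zero_div, resonantSet_zero]
      exact Set.Ici_infinite 1
    · have hx : (1 : ℚ) < x := by exact_mod_cast (by simpa using hlam : (1 : ℝ) < x)
      rw [hmuInt]
      exact resonantSet_infinite_of_rat (by linarith) P
  have rational : IsResonant mu lam → P = 0 ∨ ∃ x : ℚ, lam = x := by
    refine fun hres => or_iff_not_imp_left.mpr fun hP => ?_
    rw [hmuInt] at hres
    exact exists_rat_eq_of_isResonant hlam1 (by exact_mod_cast hP) hres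
  exact ⟨⟨rational, fun h => isResonant_iff_nonempty_resonantSet.mpr (infinite h).nonempty⟩,
    fun h => infinite (rational h)⟩
end

section
/- Let μ, λ ∈ ℂ with μ ≠ 0, Re μ ≥ 0, and (μ,λ) nonresonant. Then: (a) if Im μ ≠ 0, the pair (μ,λ) satisfies condition (DC); (b) if μ is real with μ > 0 and Im λ ≠ 0, the pair (μ,λ) satisfies condition (DC). -/
/-- Condition (DC): there is C > 0 with |1 − e^{2πiμ(j−λ)}| ≥ C^j for all
integers j ≥ 1. -/
def SatisfiesDC (mu lam : ℂ) : Prop :=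
  ∃ C : ℝ, 0 < C ∧ ∀ j : ℕ, 1 ≤ j →
    C ^ j ≤ ‖1 - Complex.exp (2 * Real.pi * Complex.I * mu * ((j : ℂ) - lam))‖

/-!
Write `e_j = exp (2πiμ(j - λ))`. Nonresonance says exactly that `e_j ≠ 1` for `j ≥ 1`, and
`|e_j| = exp (2π (Re μ Im λ + Im μ Re λ - Im μ j))`. If `Im μ ≠ 0` this modulus tends to `0` or
to `∞`, so `|1 - e_j|` is eventually at least `1/2`, and finitely many nonzero values remain.
If `μ > 0` the modulus is the constant `exp (2π μ Im λ) ≠ 1`. In both cases `|1 - e_j|` is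
bounded below by some `δ > 0`, and `C = min δ 1` gives `C ^ j ≤ C ≤ δ`.
-/

open Filter Topology

lemma satisfiesDC_of_forall_le_norm {mu lam : ℂ} {δ : ℝ} (hδ : 0 < δ)
    (h : ∀ j : ℕ, 1 ≤ j →
      δ ≤ ‖1 - Complex.exp (2 * Real.pi * Complex.I * mu * ((j : ℂ) - lam))‖) :
    SatisfiesDC mu lam :=
  ⟨min δ 1, lt_min hδ one_pos, fun j hj =>
    (pow_le_of_le_one (le_min hδ.le zero_le_one) (min_le_right _ _) (by omega)).trans
      ((min_le_left _ _).trans (h j hj))⟩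

lemma exists_pos_forall_le_of_eventually {f : ℕ → ℝ} {c : ℝ} (hc : 0 < c)
    (hpos : ∀ j, 1 ≤ j → 0 < f j) (hev : ∀ᶠ j in atTop, c ≤ f j) :
    ∃ δ, 0 < δ ∧ ∀ j, 1 ≤ j → δ ≤ f j := by
  obtain ⟨N, hN⟩ := eventually_atTop.1 hev
  obtain ⟨j₀, hj₀, hmin⟩ := (Finset.Icc 1 (N + 1)).exists_min_image f ⟨1, by simp⟩
  refine ⟨min c (f j₀), lt_min hc (hpos j₀ (Finset.mem_Icc.1 hj₀).1), fun j hj => ?_⟩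
  rcases le_total N j with hNj | hjN
  · exact (min_le_left _ _).trans (hN j hNj)
  · exact (min_le_right _ _).trans (hmin j (Finset.mem_Icc.2 ⟨hj, by omega⟩))

lemma one_sub_exp_neg_abs_le_abs_one_sub_exp (x : ℝ) :
    1 - Real.exp (-|x|) ≤ |1 - Real.exp x| := by
  rcases le_total 0 x with hx | hx
  · rw [abs_of_nonneg hx, abs_sub_comm, abs_of_nonneg (by simpa using Real.one_le_exp hx)]
    have hinv : Real.exp (-x) * Real.exp x = 1 := by rw [← Real.exp_add]; simp
    nlinarith [Real.exp_le_one_iff.2 (neg_nonpos.2 hx), Real.one_le_exp hx]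
  · rw [abs_of_nonpos hx, neg_neg, abs_of_nonneg (by simpa using Real.exp_le_one_iff.2 hx)]

lemma eventually_half_le_abs_one_sub_exp {α : Type*} {l : Filter α} {x : α → ℝ}
    (hx : Tendsto (fun a => |x a|) l atTop) : ∀ᶠ a in l, 1 / 2 ≤ |1 - Real.exp (x a)| := by
  have hlim : Tendsto (fun a => 1 - Real.exp (-|x a|)) l (𝓝 1) := by
    simpa using tendsto_const_nhds.sub
      (Real.tendsto_exp_atBot.comp (tendsto_neg_atTop_atBot.comp hx))
  filter_upwards [hlim.eventually_const_lt (by norm_num : (1 : ℝ) / 2 < 1)] with a ha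
  exact ha.le.trans (one_sub_exp_neg_abs_le_abs_one_sub_exp _)

lemma tendsto_abs_sub_mul_natCast_atTop {a b : ℝ} (hb : b ≠ 0) :
    Tendsto (fun j : ℕ => |a - b * j|) atTop atTop := by
  refine tendsto_atTop_mono (fun j => ?_)
    (tendsto_atTop_add_const_right _ (-|a|)
      (tendsto_natCast_atTop_atTop.const_mul_atTop (abs_pos.2 hb)))
  have := abs_sub_abs_le_abs_sub (b * j) a
  rw [abs_sub_comm, abs_mul, Nat.abs_cast] at this
  linarith

lemma exp_ne_one_of_not_isResonant {mu lam : ℂ} (hnr : ¬ IsResonant mu lam) {j : ℕ}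
    (hj : 1 ≤ j) :
    Complex.exp (2 * Real.pi * Complex.I * mu * ((j : ℂ) - lam)) ≠ 1 := by
  intro hexp
  obtain ⟨n, hn⟩ := Complex.exp_eq_one_iff.1 hexp
  have h2πI : 2 * (Real.pi : ℂ) * Complex.I ≠ 0 := by simp [Real.pi_ne_zero]
  have hμ : mu * ((j : ℂ) - lam) = n := mul_left_cancel₀ h2πI (by linear_combination hn)
  exact hnr ⟨j, by exact_mod_cast hj, -n, by push_cast; linear_combination -hμ⟩

lemma abs_one_sub_exp_le_norm_one_sub_exp (mu lam : ℂ) (j : ℕ) :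
    |1 - Real.exp (2 * Real.pi * (mu.re * lam.im + mu.im * lam.re) - 2 * Real.pi * mu.im * j)|
      ≤ ‖1 - Complex.exp (2 * Real.pi * Complex.I * mu * ((j : ℂ) - lam))‖ := by
  have hnorm : ‖Complex.exp (2 * Real.pi * Complex.I * mu * ((j : ℂ) - lam))‖ =
      Real.exp (2 * Real.pi * (mu.re * lam.im + mu.im * lam.re) - 2 * Real.pi * mu.im * j) := by
    rw [Complex.norm_exp]
    simp only [Complex.mul_re, Complex.mul_im, Complex.sub_re, Complex.sub_im,
      Complex.natCast_re, Complex.natCast_im, Complex.ofReal_re, Complex.ofReal_im,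
      Complex.I_re, Complex.I_im, Complex.re_ofNat, Complex.im_ofNat]
    ring_nf
  rw [← hnorm, ← norm_one (α := ℂ)]
  exact abs_norm_sub_norm_le _ _

theorem stmt_14_general (mu lam : ℂ) (hnr : ¬ IsResonant mu lam) :
    (mu.im ≠ 0 → SatisfiesDC mu lam) ∧
    ((mu.im = 0 ∧ 0 < mu.re ∧ lam.im ≠ 0) → SatisfiesDC mu lam) := by
  constructor
  · intro him
    have hslope : 2 * Real.pi * mu.im ≠ 0 := by simp [Real.pi_ne_zero, him]
    obtain ⟨δ, hδ, hle⟩ := exists_pos_forall_le_of_eventually one_half_pos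
      (fun j hj => norm_pos_iff.2 (sub_ne_zero.2 (exp_ne_one_of_not_isResonant hnr hj).symm))
      ((eventually_half_le_abs_one_sub_exp (tendsto_abs_sub_mul_natCast_atTop hslope)).mono
        fun j hj => hj.trans (abs_one_sub_exp_le_norm_one_sub_exp mu lam j))
    exact satisfiesDC_of_forall_le_norm hδ hle
  · rintro ⟨him, hμ, hlam⟩
    have hexp : Real.exp (2 * Real.pi * (mu.re * lam.im)) ≠ 1 := by
      simp [Real.pi_ne_zero, hμ.ne', hlam]
    refine satisfiesDC_of_forall_le_norm (abs_pos.2 (sub_ne_zero.2 hexp.symm)) fun j _ => ?_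
    simpa [him] using abs_one_sub_exp_le_norm_one_sub_exp mu lam j

/-- For a nonresonant pair (μ,λ) with μ ≠ 0, Re μ ≥ 0:
(a) if Im μ ≠ 0 then (μ,λ) satisfies (DC);
(b) if μ is real with μ > 0 and Im λ ≠ 0 then (μ,λ) satisfies (DC). -/
theorem stmt_14 (mu lam : ℂ) (hmu : mu ≠ 0) (hre : 0 ≤ mu.re)
    (hnr : ¬ IsResonant mu lam) :
    (mu.im ≠ 0 → SatisfiesDC mu lam) ∧
    ((mu.im = 0 ∧ 0 < mu.re ∧ lam.im ≠ 0) → SatisfiesDC mu lam) :=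
  stmt_14_general mu lam hnr
end
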